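/- For every natural number n and all integers m, s and t, 5·∑_{j=1}^n (−F_{m−5})^{n−j}·F_m^{j−1}·G_{5(j+t)+m+s} = F_m^n·G_{5(n+t+1)+s} − (−1)^n·F_{m−5}^n·G_{5(t+1)+s}. -/

import Mathlib

/-!
Write `b j = G (5 (j + t) + s)`. The identity `5 G (x + m) = F m G (x + 5) + F (m - 5) G x` turns
each summand `5 G (5 (j + t) + m + s)` into `F m b (j + 1) + F (m - 5) b j`, and with the weights
`(-F (m - 5)) ^ (n - j) F m ^ (j - 1)` the sum telescopes to `F m ^ n b (n + 1) - (-F (m - 5)) ^ n b 1`.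
-/

open Finset

section Telescoping

variable {R : Type*} [CommRing R]

theorem sum_Icc_weighted_telescope (p q : R) (b : ℕ → R) (n : ℕ) :
    ∑ j ∈ Icc 1 n, (-q) ^ (n - j) * p ^ (j - 1) * (p * b (j + 1) + q * b j) =
      p ^ n * b (n + 1) - (-q) ^ n * b 1 := by
  induction n with
  | zero => simp
  | succ n ih =>
    have hshift : ∑ j ∈ Icc 1 n, (-q) ^ (n + 1 - j) * p ^ (j - 1) * (p * b (j + 1) + q * b j) =
        -q * ∑ j ∈ Icc 1 n, (-q) ^ (n - j) * p ^ (j - 1) * (p * b (j + 1) + q * b j) := by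
      rw [mul_sum]
      refine sum_congr rfl fun j hj => ?_
      rw [Nat.sub_add_comm (mem_Icc.mp hj).2, pow_succ]
      ring
    rw [sum_Icc_succ_top (Nat.le_add_left 1 n), hshift, ih, Nat.sub_self, Nat.add_sub_cancel]
    ring

end Telescoping

def IsGibonacci {R : Type*} [Ring R] (f : ℤ → R) : Prop :=
  ∀ k, f (k + 2) = f (k + 1) + f k

namespace IsGibonacci

variable {R : Type*} [CommRing R] {f g : ℤ → R}

theorem ext (hf : IsGibonacci f) (hg : IsGibonacci g) (h0 : f 0 = g 0) (h1 : f 1 = g 1) :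
    f = g := by
  suffices h : ∀ k : ℤ, f k = g k ∧ f (k + 1) = g (k + 1) from funext fun k => (h k).1
  intro k
  induction k using Int.induction_on with
  | zero => exact ⟨h0, h1⟩
  | succ k ih =>
    refine ⟨ih.2, ?_⟩
    rw [add_assoc, one_add_one_eq_two, hf, hg, ih.1, ih.2]
  | pred k ih =>
    refine ⟨?_, by rw [sub_add_cancel]; exact ih.1⟩
    have hf' := hf (-k - 1)
    have hg' := hg (-k - 1)
    rw [show -(k : ℤ) - 1 + 2 = -k + 1 by ring, sub_add_cancel] at hf' hg'
    rw [ih.1, ih.2] at hf'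
    exact add_left_cancel (hf'.symm.trans hg')

theorem add (hf : IsGibonacci f) (hg : IsGibonacci g) : IsGibonacci (fun k => f k + g k) :=
  fun k => by simp only [hf k, hg k]; ring

theorem const_mul (c : R) (hf : IsGibonacci f) : IsGibonacci (fun k => c * f k) :=
  fun k => by simp only [hf k]; ring

theorem mul_const (c : R) (hf : IsGibonacci f) : IsGibonacci (fun k => f k * c) :=
  fun k => by simp only [hf k]; ring

theorem comp_add_const (a : ℤ) (hf : IsGibonacci f) : IsGibonacci (fun k => f (k + a)) :=
  fun k => by simp only [add_right_comm k _ a, hf (k + a)]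

theorem comp_const_add (a : ℤ) (hf : IsGibonacci f) : IsGibonacci (fun k => f (a + k)) := by
  simpa only [add_comm _ a] using hf.comp_add_const a

theorem apply_add_five (hf : IsGibonacci f) (x : ℤ) : f (x + 5) = 5 * f (x + 1) + 3 * f x := by
  have h0 := hf x; have h1 := hf (x + 1); have h2 := hf (x + 2); have h3 := hf (x + 3)
  ring_nf at h0 h1 h2 h3 ⊢
  linear_combination h3 + h2 + 2 * h1 + 3 * h0

/-- The case `k = 5` of `F k G (x + m) = F m G (x + k) - (-1) ^ k F (m - k) G x`; both sides are
gibonacci in `m`, so it suffices to check `m = 0, 1`. -/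
theorem five_mul_apply_add {F G : ℤ → R} (hF : IsGibonacci F) (hF0 : F 0 = 0) (hF1 : F 1 = 1)
    (hG : IsGibonacci G) (x m : ℤ) :
    5 * G (x + m) = F m * G (x + 5) + F (m - 5) * G x := by
  have hFm1 : F (-1) = 1 := by have := hF (-1); norm_num [hF0, hF1] at this; linear_combination -this
  have hFm2 : F (-2) = -1 := by have := hF (-2); norm_num [hF0, hFm1] at this; linear_combination -this
  have hFm3 : F (-3) = 2 := by have := hF (-3); norm_num [hFm1, hFm2] at this; linear_combination -this
  have hFm4 : F (-4) = -3 := by have := hF (-4); norm_num [hFm2, hFm3] at this; linear_combination -this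
  have hFm5 : F (-5) = 5 := by have := hF (-5); norm_num [hFm3, hFm4] at this; linear_combination -this
  refine congrFun (ext ((hG.comp_const_add x).const_mul 5)
    ((hF.mul_const _).add ((hF.comp_add_const (-5)).mul_const _)) ?_ ?_) m
  · simp [hF0, hFm5]
  · norm_num [hF1, hFm4, hG.apply_add_five]

end IsGibonacci

theorem weighted_sum_gibonacci (F : ℤ → ℤ) (hF0 : F 0 = 0) (hF1 : F 1 = 1)
    (hF : ∀ k : ℤ, F (k + 2) = F (k + 1) + F k)
    (G : ℤ → ℤ) (hG : ∀ k : ℤ, G (k + 2) = G (k + 1) + G k) (n : ℕ) (m s t : ℤ) :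
    5 * ∑ j ∈ Finset.Icc 1 n,
        (-F (m - 5)) ^ (n - j) * F m ^ (j - 1) * G (5 * ((j : ℤ) + t) + m + s) =
      F m ^ n * G (5 * ((n : ℤ) + t + 1) + s) - (-1 : ℤ) ^ n * F (m - 5) ^ n * G (5 * (t + 1) + s) := by
  have hterm (j : ℕ) : 5 * G (5 * ((j : ℤ) + t) + m + s) =
      F m * G (5 * (((j + 1 : ℕ) : ℤ) + t) + s) + F (m - 5) * G (5 * ((j : ℤ) + t) + s) := by
    have := IsGibonacci.five_mul_apply_add hF hF0 hF1 hG (5 * ((j : ℤ) + t) + s) m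
    push_cast
    convert this using 3 <;> ring_nf
  rw [mul_sum]
  simp_rw [mul_left_comm (5 : ℤ), hterm]
  refine (sum_Icc_weighted_telescope (F m) (F (m - 5)) (fun j => G (5 * ((j : ℤ) + t) + s)) n).trans ?_
  rw [neg_pow]
  push_cast
  ring_nf
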